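/- Let G be a group with proper subgroups L and R, and let Γ = Cos(G, L, R). Then Γ is locally (G,2)-arc-transitive if and only if L acts 2-transitively on the coset space [L : L ∩ R] and R acts 2-transitively on the coset space [R : L ∩ R]. -/

import Mathlib

open MulAction Pointwise
open scoped MatrixGroups

/-- An `s`-arc in a graph: a sequence of `s+1` vertices in which consecutive vertices are
adjacent and `αᵢ ≠ αᵢ₊₂` for all `i`. -/
def SimpleGraph.IsNArc {V : Type*} (Γ : SimpleGraph V) (s : ℕ) (p : Fin (s + 1) → V) : Prop :=
  (∀ i : Fin s, Γ.Adj (p i.castSucc) (p i.succ)) ∧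
    ∀ (i : ℕ) (h : i + 2 ≤ s), p ⟨i, by omega⟩ ≠ p ⟨i + 2, by omega⟩

/-- A group `G` acting on the vertices of `Γ` acts by graph automorphisms. -/
def ActsOn {V : Type*} (Γ : SimpleGraph V) (G : Type*) [Group G] [MulAction G V] : Prop :=
  ∀ (g : G) (u v : V), Γ.Adj u v → Γ.Adj (g • u) (g • v)

/-- `Γ` is locally `(G,s)`-arc-transitive: for each vertex `α`, the stabiliser `G_α` is
transitive on the `s`-arcs starting at `α`; equivalently any two `s`-arcs with the same
initial vertex are related by an element of `G` (which then necessarily fixes that vertex). -/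
def LocallyArcTrans {V : Type*} (Γ : SimpleGraph V) (G : Type*) [Group G] [MulAction G V]
    (s : ℕ) : Prop :=
  ∀ p q : Fin (s + 1) → V, Γ.IsNArc s p → Γ.IsNArc s q → p 0 = q 0 →
    ∃ g : G, ∀ i, g • p i = q i

/-- `G` is quasiprimitive on `Ω`: it is transitive and all nontrivial normal subgroups are
transitive. -/
def IsQuasiprimitive (G Ω : Type*) [Group G] [MulAction G Ω] : Prop :=
  IsPretransitive G Ω ∧ ∀ N : Subgroup G, N.Normal → N ≠ ⊥ → IsPretransitive N Ω

/-- `G` is primitive on `Ω`: transitive and every block is trivial. -/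
def IsPrimitiveAction (G Ω : Type*) [Group G] [MulAction G Ω] : Prop :=
  IsPretransitive G Ω ∧ ∀ B : Set Ω, IsBlock G B → B.Subsingleton ∨ B = Set.univ

/-- 2-transitivity of an action. -/
def IsTwoTrans (G X : Type*) [Group G] [MulAction G X] : Prop :=
  ∀ a b c d : X, a ≠ b → c ≠ d → ∃ g : G, g • a = c ∧ g • b = d

/-- `G` is transitive on the edges of `Γ`. -/
def EdgeTransitive {V : Type*} (Γ : SimpleGraph V) (G : Type*) [Group G] [MulAction G V] : Prop :=
  ∀ a b c d : V, Γ.Adj a b → Γ.Adj c d →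
    ∃ g : G, (g • a = c ∧ g • b = d) ∨ (g • a = d ∧ g • b = c)

/-- The coset graph `Cos(G, L, R)`: a bipartite graph on `[G:L] ⊔ [G:R]`, where two cosets
are adjacent iff they intersect nontrivially. -/
def CosetGraph (G : Type*) [Group G] (L R : Subgroup G) : SimpleGraph ((G ⧸ L) ⊕ (G ⧸ R)) where
  Adj a b :=
    (∃ g : G, a = Sum.inl (g : G ⧸ L) ∧ b = Sum.inr (g : G ⧸ R)) ∨
      (∃ g : G, a = Sum.inr (g : G ⧸ R) ∧ b = Sum.inl (g : G ⧸ L))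
  symm := by
    constructor
    rintro a b (⟨g, h1, h2⟩ | ⟨g, h1, h2⟩)
    · exact Or.inr ⟨g, h2, h1⟩
    · exact Or.inl ⟨g, h2, h1⟩
  loopless := by
    constructor
    rintro a (⟨g, h1, h2⟩ | ⟨g, h1, h2⟩) <;> rw [h1] at h2 <;> simp at h2

/-- `G` acts on the vertex set of a coset graph (on both coset spaces simultaneously),
by (left) multiplication. -/
instance sumMulAction {G α β : Type*} [Monoid G] [MulAction G α] [MulAction G β] :
    MulAction G (α ⊕ β) where
  smul g := Sum.map (g • ·) (g • ·)
  one_smul x := by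
    cases x with
    | inl a => show Sum.inl ((1 : G) • a) = Sum.inl a; rw [one_smul]
    | inr a => show Sum.inr ((1 : G) • a) = Sum.inr a; rw [one_smul]
  mul_smul g h x := by
    cases x with
    | inl a => show Sum.inl ((g * h) • a) = Sum.inl (g • h • a); rw [mul_smul]
    | inr a => show Sum.inr ((g * h) • a) = Sum.inr (g • h • a); rw [mul_smul]

/-- The amalgams `(A, B, A ⊓ B)` and `(C, D, C ⊓ D)` are isomorphic: there are isomorphisms
`A ≅ C` and `B ≅ D` that agree on `A ⊓ B` and map `A ⊓ B` onto `C ⊓ D`. -/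
def AmalgamIso {G₁ G₂ : Type*} [Group G₁] [Group G₂] (A B : Subgroup G₁)
    (C D : Subgroup G₂) : Prop :=
  ∃ (φ : ↥A ≃* ↥C) (ψ : ↥B ≃* ↥D),
    (∀ (x : G₁) (hA : x ∈ A) (hB : x ∈ B), ((φ ⟨x, hA⟩ : G₂) = (ψ ⟨x, hB⟩ : G₂))) ∧
    (∀ (x : G₁) (hA : x ∈ A), x ∈ B ↔ (φ ⟨x, hA⟩ : G₂) ∈ D) ∧
    (∀ (x : G₁) (hB : x ∈ B), x ∈ A ↔ (ψ ⟨x, hB⟩ : G₂) ∈ C)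

/-- Data witnessing that a quasiprimitive action of `G` on `Ω` has type PA:
a `G`-invariant partition `𝓑` of `Ω` (the fibres of `π`), on which `G` acts faithfully
(via `ρ`), identified with `Δ^k` (`k ≥ 2`) in such a way that `G ≤ H Wr S_k` in product
action, where `H ≤ Sym(Δ)` is almost simple (with socle `T`) and quasiprimitive on `Δ`.
Moreover `N = T^k` is the unique minimal normal subgroup of `G`. -/
structure PAStructure (G : Type*) [Group G] (Ω : Type*) [MulAction G Ω] where
  /-- the ingredient set `Δ` of the product structure -/
  Δ : Type
  /-- the number of factors -/
  k : ℕ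
  two_le_k : 2 ≤ k
  quasiprimitive : IsQuasiprimitive G Ω
  /-- the map sending a point to its block, with blocks identified with `Δ^k` -/
  π : Ω → Fin k → Δ
  π_surj : Function.Surjective π
  /-- the action of `G` on the set of blocks `Δ^k` -/
  ρ : G →* Equiv.Perm (Fin k → Δ)
  ρ_faithful : Function.Injective ρ
  compat : ∀ (g : G) (x : Ω), π (g • x) = ρ g (π x)
  /-- the almost simple group `H ≤ Sym(Δ)` -/
  H : Subgroup (Equiv.Perm Δ)
  H_quasiprimitive : IsQuasiprimitive ↥H Δ
  /-- `G ≤ H Wr S_k` in product action -/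
  wreath : ∀ g : G, ∃ (h : Fin k → Equiv.Perm Δ) (σ : Equiv.Perm (Fin k)),
    (∀ i, h i ∈ H) ∧ ∀ (f : Fin k → Δ) (i : Fin k), ρ g f i = h i (f (σ⁻¹ i))
  /-- the socle `T` of `H` -/
  T : Subgroup (Equiv.Perm Δ)
  T_le : T ≤ H
  T_simple : IsSimpleGroup ↥T
  T_nonabelian : ∃ a b : ↥T, a * b ≠ b * a
  T_normal : ∀ h ∈ H, ∀ t ∈ T, h * t * h⁻¹ ∈ T
  T_centralizer : ∀ h ∈ H, (∀ t ∈ T, h * t = t * h) → h = 1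
  /-- the unique minimal normal subgroup `N = T^k` of `G` -/
  N : Subgroup G
  N_normal : N.Normal
  N_ne_bot : N ≠ ⊥
  N_mem : ∀ g : G, g ∈ N ↔ ∃ t : Fin k → Equiv.Perm Δ, (∀ i, t i ∈ T) ∧
    ∀ (f : Fin k → Δ) (i : Fin k), ρ g f i = t i (f i)
  N_min : ∀ M : Subgroup G, M.Normal → M ≠ ⊥ → N ≤ M

namespace PAStructure

variable {G : Type*} [Group G] {Ω : Type*} [MulAction G Ω]

/-- The point stabiliser `N_α` is the straight diagonal subgroup
`{(t,…,t) : t ∈ R}` of `N_B = R^k`. -/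
def IsStraightDiagonalAt (P : PAStructure G Ω) (α : Ω) : Prop :=
  ∃ R : Subgroup (Equiv.Perm P.Δ),
    ∀ g ∈ P.N, g ∈ MulAction.stabilizer G α ↔
      ∃ t : ↥R, ∀ (f : Fin P.k → P.Δ) (i : Fin P.k), P.ρ g f i = (t : Equiv.Perm P.Δ) (f i)

/-- The point stabiliser `N_α` is a diagonal subgroup
`{(t^{φ₁},…,t^{φ_k}) : t ∈ R}` of `N_B = R^k`, for automorphisms `φᵢ` of `R`;
in particular `N_α ≅ R`. -/
def IsDiagonalAt (P : PAStructure G Ω) (α : Ω) : Prop :=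
  ∃ (R : Subgroup (Equiv.Perm P.Δ)) (φ : Fin P.k → MulAut ↥R),
    ∀ g ∈ P.N, g ∈ MulAction.stabilizer G α ↔
      ∃ t : ↥R, ∀ (f : Fin P.k → P.Δ) (i : Fin P.k),
        P.ρ g f i = ((φ i t : ↥R) : Equiv.Perm P.Δ) (f i)

/-- The PA action is of straight diagonal type. -/
def StraightType (P : PAStructure G Ω) : Prop := ∃ α : Ω, P.IsStraightDiagonalAt α

/-- The PA action is of twisted diagonal type: some point stabiliser `N_α` is a twisted
diagonal subgroup (diagonal, but not straight). -/
def TwistedType (P : PAStructure G Ω) : Prop :=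
  ∃ α : Ω, P.IsDiagonalAt α ∧ ¬ P.IsStraightDiagonalAt α

/-- The PA action is of nondiagonal type: the point stabilisers `N_α` are not diagonal
subgroups (`N_α ≇ R`). -/
def NondiagonalType (P : PAStructure G Ω) : Prop := ∃ α : Ω, ¬ P.IsDiagonalAt α

end PAStructure

section CosetGraphProof

variable {G : Type*} [Group G] {L R : Subgroup G}

private lemma cg_adj_lr {a : G ⧸ L} {b : G ⧸ R} :
    (CosetGraph G L R).Adj (Sum.inl a) (Sum.inr b) ↔ ∃ g : G, a = ↑g ∧ b = ↑g := by
  constructor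
  · rintro (⟨g, h1, h2⟩ | ⟨g, h1, h2⟩)
    · exact ⟨g, Sum.inl.inj h1, Sum.inr.inj h2⟩
    · cases h1
  · rintro ⟨g, h1, h2⟩
    exact Or.inl ⟨g, by rw [h1], by rw [h2]⟩

private lemma cg_adj_rl {b : G ⧸ R} {a : G ⧸ L} :
    (CosetGraph G L R).Adj (Sum.inr b) (Sum.inl a) ↔ ∃ g : G, a = ↑g ∧ b = ↑g := by
  constructor
  · rintro (⟨g, h1, h2⟩ | ⟨g, h1, h2⟩)
    · cases h1
    · exact ⟨g, Sum.inl.inj h2, Sum.inr.inj h1⟩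
  · rintro ⟨g, h1, h2⟩
    exact Or.inr ⟨g, by rw [h2], by rw [h1]⟩

private lemma cg_smul_inl (g : G) (a : G ⧸ L) :
    (g • (Sum.inl a : (G ⧸ L) ⊕ (G ⧸ R))) = Sum.inl (g • a) := rfl

private lemma cg_smul_inr (g : G) (b : G ⧸ R) :
    (g • (Sum.inr b : (G ⧸ L) ⊕ (G ⧸ R))) = Sum.inr (g • b) := rfl

/-- Forward direction, `L` side: local 2-arc-transitivity gives 2-transitivity of `L`
on `[L : L ∩ R]`. -/
private lemma cg_fwd_L (h : LocallyArcTrans (CosetGraph G L R) G 2) :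
    IsTwoTrans ↥L (↥L ⧸ (L ⊓ R).subgroupOf L) := by
  intro a b c d hab hcd
  obtain ⟨x, rfl⟩ := QuotientGroup.mk_surjective a
  obtain ⟨y, rfl⟩ := QuotientGroup.mk_surjective b
  obtain ⟨z, rfl⟩ := QuotientGroup.mk_surjective c
  obtain ⟨w, rfl⟩ := QuotientGroup.mk_surjective d
  have hxy : (x : G)⁻¹ * (y : G) ∉ R := by
    intro hmem
    refine hab (QuotientGroup.eq.mpr (Subgroup.mem_subgroupOf.mpr (Subgroup.mem_inf.mpr
      ⟨SetLike.coe_mem _, ?_⟩)))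
    simpa using hmem
  have hzw : (z : G)⁻¹ * (w : G) ∉ R := by
    intro hmem
    refine hcd (QuotientGroup.eq.mpr (Subgroup.mem_subgroupOf.mpr (Subgroup.mem_inf.mpr
      ⟨SetLike.coe_mem _, ?_⟩)))
    simpa using hmem
  have harc : ∀ u v : ↥L, (u : G)⁻¹ * (v : G) ∉ R →
      (CosetGraph G L R).IsNArc 2
        ![Sum.inr ↑(1 : G), Sum.inl ↑(1 : G), Sum.inr ↑((u : G)⁻¹ * (v : G))] := by
    intro u v huv
    constructor
    · intro i
      fin_cases i
      · exact cg_adj_rl.mpr ⟨1, rfl, rfl⟩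
      · refine cg_adj_lr.mpr ⟨(u : G)⁻¹ * (v : G), ?_, rfl⟩
        refine QuotientGroup.eq.mpr ?_
        simpa using mul_mem (inv_mem u.2) v.2
    · intro i hi
      have : i = 0 := by omega
      subst this
      intro hcontra
      have h2 : (↑(1 : G) : G ⧸ R) = ↑((u : G)⁻¹ * (v : G)) := Sum.inr.inj hcontra
      exact huv (by simpa using QuotientGroup.eq.mp h2)
  obtain ⟨g, hg⟩ := h _ _ (harc x y hxy) (harc z w hzw) rfl
  have hg0 : g • (Sum.inr ↑(1 : G) : (G ⧸ L) ⊕ (G ⧸ R)) = Sum.inr ↑(1 : G) := hg 0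
  have hg1 : g • (Sum.inl ↑(1 : G) : (G ⧸ L) ⊕ (G ⧸ R)) = Sum.inl ↑(1 : G) := hg 1
  have hg2 : g • (Sum.inr ↑((x : G)⁻¹ * (y : G)) : (G ⧸ L) ⊕ (G ⧸ R))
      = Sum.inr ↑((z : G)⁻¹ * (w : G)) := hg 2
  rw [cg_smul_inr] at hg0
  rw [cg_smul_inl] at hg1
  rw [cg_smul_inr] at hg2
  have hgR : g ∈ R := by
    have := QuotientGroup.eq.mp (Sum.inr.inj hg0)
    simpa using this
  have hgL : g ∈ L := by
    have := QuotientGroup.eq.mp (Sum.inl.inj hg1)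
    simpa using this
  have hg2' : (g * ((x : G)⁻¹ * (y : G)))⁻¹ * ((z : G)⁻¹ * (w : G)) ∈ R :=
    QuotientGroup.eq.mp (Sum.inr.inj hg2)
  refine ⟨z * ⟨g, hgL⟩ * x⁻¹, ?_, ?_⟩
  · show ((z * ⟨g, hgL⟩ * x⁻¹ * x : ↥L) : ↥L ⧸ (L ⊓ R).subgroupOf L) = ↑z
    refine QuotientGroup.eq.mpr (Subgroup.mem_subgroupOf.mpr (Subgroup.mem_inf.mpr
      ⟨SetLike.coe_mem _, ?_⟩))
    have : ((z * ⟨g, hgL⟩ * x⁻¹ * x)⁻¹ * z : ↥L) = (⟨g, hgL⟩ : ↥L)⁻¹ := by group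
    rw [this]
    simpa using inv_mem hgR
  · show ((z * ⟨g, hgL⟩ * x⁻¹ * y : ↥L) : ↥L ⧸ (L ⊓ R).subgroupOf L) = ↑w
    refine QuotientGroup.eq.mpr (Subgroup.mem_subgroupOf.mpr (Subgroup.mem_inf.mpr
      ⟨SetLike.coe_mem _, ?_⟩))
    have hcoe : (((z * ⟨g, hgL⟩ * x⁻¹ * y)⁻¹ * w : ↥L) : G)
        = (g * ((x : G)⁻¹ * (y : G)))⁻¹ * ((z : G)⁻¹ * (w : G)) := by
      push_cast
      group
    rw [hcoe]
    exact hg2'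

/-- Forward direction, `R` side. -/
private lemma cg_fwd_R (h : LocallyArcTrans (CosetGraph G L R) G 2) :
    IsTwoTrans ↥R (↥R ⧸ (L ⊓ R).subgroupOf R) := by
  intro a b c d hab hcd
  obtain ⟨x, rfl⟩ := QuotientGroup.mk_surjective a
  obtain ⟨y, rfl⟩ := QuotientGroup.mk_surjective b
  obtain ⟨z, rfl⟩ := QuotientGroup.mk_surjective c
  obtain ⟨w, rfl⟩ := QuotientGroup.mk_surjective d
  have hxy : (x : G)⁻¹ * (y : G) ∉ L := by
    intro hmem
    refine hab (QuotientGroup.eq.mpr (Subgroup.mem_subgroupOf.mpr (Subgroup.mem_inf.mpr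
      ⟨?_, SetLike.coe_mem _⟩)))
    simpa using hmem
  have hzw : (z : G)⁻¹ * (w : G) ∉ L := by
    intro hmem
    refine hcd (QuotientGroup.eq.mpr (Subgroup.mem_subgroupOf.mpr (Subgroup.mem_inf.mpr
      ⟨?_, SetLike.coe_mem _⟩)))
    simpa using hmem
  have harc : ∀ u v : ↥R, (u : G)⁻¹ * (v : G) ∉ L →
      (CosetGraph G L R).IsNArc 2
        ![Sum.inl ↑(1 : G), Sum.inr ↑(1 : G), Sum.inl ↑((u : G)⁻¹ * (v : G))] := by
    intro u v huv
    constructor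
    · intro i
      fin_cases i
      · exact cg_adj_lr.mpr ⟨1, rfl, rfl⟩
      · refine cg_adj_rl.mpr ⟨(u : G)⁻¹ * (v : G), rfl, ?_⟩
        refine QuotientGroup.eq.mpr ?_
        simpa using mul_mem (inv_mem u.2) v.2
    · intro i hi
      have : i = 0 := by omega
      subst this
      intro hcontra
      have h2 : (↑(1 : G) : G ⧸ L) = ↑((u : G)⁻¹ * (v : G)) := Sum.inl.inj hcontra
      exact huv (by simpa using QuotientGroup.eq.mp h2)
  obtain ⟨g, hg⟩ := h _ _ (harc x y hxy) (harc z w hzw) rfl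
  have hg0 : g • (Sum.inl ↑(1 : G) : (G ⧸ L) ⊕ (G ⧸ R)) = Sum.inl ↑(1 : G) := hg 0
  have hg1 : g • (Sum.inr ↑(1 : G) : (G ⧸ L) ⊕ (G ⧸ R)) = Sum.inr ↑(1 : G) := hg 1
  have hg2 : g • (Sum.inl ↑((x : G)⁻¹ * (y : G)) : (G ⧸ L) ⊕ (G ⧸ R))
      = Sum.inl ↑((z : G)⁻¹ * (w : G)) := hg 2
  rw [cg_smul_inl] at hg0
  rw [cg_smul_inr] at hg1
  rw [cg_smul_inl] at hg2
  have hgL : g ∈ L := by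
    have := QuotientGroup.eq.mp (Sum.inl.inj hg0)
    simpa using this
  have hgR : g ∈ R := by
    have := QuotientGroup.eq.mp (Sum.inr.inj hg1)
    simpa using this
  have hg2' : (g * ((x : G)⁻¹ * (y : G)))⁻¹ * ((z : G)⁻¹ * (w : G)) ∈ L :=
    QuotientGroup.eq.mp (Sum.inl.inj hg2)
  refine ⟨z * ⟨g, hgR⟩ * x⁻¹, ?_, ?_⟩
  · show ((z * ⟨g, hgR⟩ * x⁻¹ * x : ↥R) : ↥R ⧸ (L ⊓ R).subgroupOf R) = ↑z
    refine QuotientGroup.eq.mpr (Subgroup.mem_subgroupOf.mpr (Subgroup.mem_inf.mpr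
      ⟨?_, SetLike.coe_mem _⟩))
    have : ((z * ⟨g, hgR⟩ * x⁻¹ * x)⁻¹ * z : ↥R) = (⟨g, hgR⟩ : ↥R)⁻¹ := by group
    rw [this]
    simpa using inv_mem hgL
  · show ((z * ⟨g, hgR⟩ * x⁻¹ * y : ↥R) : ↥R ⧸ (L ⊓ R).subgroupOf R) = ↑w
    refine QuotientGroup.eq.mpr (Subgroup.mem_subgroupOf.mpr (Subgroup.mem_inf.mpr
      ⟨?_, SetLike.coe_mem _⟩))
    have hcoe : (((z * ⟨g, hgR⟩ * x⁻¹ * y)⁻¹ * w : ↥R) : G)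
        = (g * ((x : G)⁻¹ * (y : G)))⁻¹ * ((z : G)⁻¹ * (w : G)) := by
      push_cast
      group
    rw [hcoe]
    exact hg2'

end CosetGraphProof

section CosetGraphProof2

variable {G : Type*} [Group G] {L R : Subgroup G}

/-- Stabiliser-style reformulation: membership from fixing the base point. -/
private lemma cg_mem_of_fix_one {S T : Subgroup G} (k : ↥T)
    (hk : k • (↑(1 : ↥T) : ↥T ⧸ S.subgroupOf T) = ↑(1 : ↥T)) : (k : G) ∈ S := by
  have : ((k * 1 : ↥T) : ↥T ⧸ S.subgroupOf T) = ↑(1 : ↥T) := hk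
  have h2 := QuotientGroup.eq.mp this
  have h3 : ((k * 1 : ↥T)⁻¹ * 1 : ↥T) = k⁻¹ := by group
  rw [h3] at h2
  have := Subgroup.mem_subgroupOf.mp h2
  simpa using inv_mem this

/-- Backward direction. -/
private lemma cg_bwd (hL2 : IsTwoTrans ↥L (↥L ⧸ (L ⊓ R).subgroupOf L))
    (hR2 : IsTwoTrans ↥R (↥R ⧸ (L ⊓ R).subgroupOf R)) :
    LocallyArcTrans (CosetGraph G L R) G 2 := by
  intro p q hp hq h0
  have a01 : (CosetGraph G L R).Adj (p 0) (p 1) := hp.1 0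
  have a12 : (CosetGraph G L R).Adj (p 1) (p 2) := hp.1 1
  have b01 : (CosetGraph G L R).Adj (q 0) (q 1) := hq.1 0
  have b12 : (CosetGraph G L R).Adj (q 1) (q 2) := hq.1 1
  have n02 : p 0 ≠ p 2 := hp.2 0 (by omega)
  have m02 : q 0 ≠ q 2 := hq.2 0 (by omega)
  rcases a01 with ⟨g₁, e0, e1⟩ | ⟨g₁, e0, e1⟩
  · -- p 0 = inl ↑g₁, p 1 = inr ↑g₁
    rcases a12 with ⟨g, f1, f2⟩ | ⟨g₂, f1, f2⟩
    · rw [e1] at f1; cases f1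
    rcases b01 with ⟨g₁', d0, d1⟩ | ⟨g₁', d0, d1⟩
    swap
    · rw [← h0, e0] at d0; cases d0
    rcases b12 with ⟨g', c1, c2⟩ | ⟨g₂', c1, c2⟩
    · rw [d1] at c1; cases c1
    -- relations
    have hu : g₁⁻¹ * g₂ ∈ R := by
      have : (↑g₁ : G ⧸ R) = ↑g₂ := Sum.inr.inj (e1.symm.trans f1)
      exact QuotientGroup.eq.mp this
    have hv : g₁⁻¹ * g₁' ∈ L := by
      have : (↑g₁ : G ⧸ L) = ↑g₁' := Sum.inl.inj (e0.symm.trans (h0.trans d0))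
      exact QuotientGroup.eq.mp this
    have hu' : g₁'⁻¹ * g₂' ∈ R := by
      have : (↑g₁' : G ⧸ R) = ↑g₂' := Sum.inr.inj (d1.symm.trans c1)
      exact QuotientGroup.eq.mp this
    have hunl : g₁⁻¹ * g₂ ∉ L := by
      intro hmem
      refine n02 ?_
      rw [e0, f2]
      exact congrArg Sum.inl (QuotientGroup.eq.mpr hmem)
    have hu'nl : g₁'⁻¹ * g₂' ∉ L := by
      intro hmem
      refine m02 ?_
      rw [d0, c2]
      exact congrArg Sum.inl (QuotientGroup.eq.mpr hmem)
    -- apply 2-transitivity of R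
    have hne1 : (↑(1 : ↥R) : ↥R ⧸ (L ⊓ R).subgroupOf R) ≠ ↑(⟨g₁⁻¹ * g₂, hu⟩ : ↥R) := by
      intro heq
      have := Subgroup.mem_subgroupOf.mp (QuotientGroup.eq.mp heq)
      exact hunl (by simpa using (Subgroup.mem_inf.mp (by simpa using this)).1)
    have hne2 : (↑(1 : ↥R) : ↥R ⧸ (L ⊓ R).subgroupOf R) ≠ ↑(⟨g₁'⁻¹ * g₂', hu'⟩ : ↥R) := by
      intro heq
      have := Subgroup.mem_subgroupOf.mp (QuotientGroup.eq.mp heq)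
      exact hu'nl (by simpa using (Subgroup.mem_inf.mp (by simpa using this)).1)
    obtain ⟨k, hk1, hk2⟩ := hR2 _ _ _ _ hne1 hne2
    have hkLR : (k : G) ∈ L ⊓ R := cg_mem_of_fix_one k hk1
    have hkL : (k : G) ∈ L := (Subgroup.mem_inf.mp hkLR).1
    have hkR : (k : G) ∈ R := (Subgroup.mem_inf.mp hkLR).2
    have hk2' : ((k : G) * (g₁⁻¹ * g₂))⁻¹ * (g₁'⁻¹ * g₂') ∈ L := by
      have : ((k * ⟨g₁⁻¹ * g₂, hu⟩ : ↥R) : ↥R ⧸ (L ⊓ R).subgroupOf R)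
          = ↑(⟨g₁'⁻¹ * g₂', hu'⟩ : ↥R) := hk2
      have h2 := Subgroup.mem_subgroupOf.mp (QuotientGroup.eq.mp this)
      have h3 := (Subgroup.mem_inf.mp (by simpa using h2)).1
      simpa [mul_assoc] using h3
    refine ⟨g₁' * (k : G) * g₁⁻¹, ?_⟩
    intro i
    fin_cases i
    · rw [show ((⟨0, by omega⟩ : Fin 3) : Fin 3) = (0 : Fin 3) from rfl, e0, d0, cg_smul_inl]
      refine congrArg Sum.inl ?_
      show (↑(g₁' * (k : G) * g₁⁻¹ * g₁) : G ⧸ L) = ↑g₁'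
      refine QuotientGroup.eq.mpr ?_
      have : (g₁' * (k : G) * g₁⁻¹ * g₁)⁻¹ * g₁' = (k : G)⁻¹ := by group
      rw [this]; exact inv_mem hkL
    · rw [show ((⟨1, by omega⟩ : Fin 3) : Fin 3) = (1 : Fin 3) from rfl, e1, d1, cg_smul_inr]
      refine congrArg Sum.inr ?_
      show (↑(g₁' * (k : G) * g₁⁻¹ * g₁) : G ⧸ R) = ↑g₁'
      refine QuotientGroup.eq.mpr ?_
      have : (g₁' * (k : G) * g₁⁻¹ * g₁)⁻¹ * g₁' = (k : G)⁻¹ := by group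
      rw [this]; exact inv_mem hkR
    · rw [show ((⟨2, by omega⟩ : Fin 3) : Fin 3) = (2 : Fin 3) from rfl, f2, c2, cg_smul_inl]
      refine congrArg Sum.inl ?_
      show (↑(g₁' * (k : G) * g₁⁻¹ * g₂) : G ⧸ L) = ↑g₂'
      refine QuotientGroup.eq.mpr ?_
      have : (g₁' * (k : G) * g₁⁻¹ * g₂)⁻¹ * g₂'
          = ((k : G) * (g₁⁻¹ * g₂))⁻¹ * (g₁'⁻¹ * g₂') := by group
      rw [this]; exact hk2'
  · -- p 0 = inr ↑g₁, p 1 = inl ↑g₁ : symmetric, use hL2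
    rcases a12 with ⟨g₂, f1, f2⟩ | ⟨g₂, f1, f2⟩
    swap
    · rw [e1] at f1; cases f1
    rcases b01 with ⟨g₁', d0, d1⟩ | ⟨g₁', d0, d1⟩
    · rw [← h0, e0] at d0; cases d0
    rcases b12 with ⟨g₂', c1, c2⟩ | ⟨g₂', c1, c2⟩
    swap
    · rw [d1] at c1; cases c1
    have hu : g₁⁻¹ * g₂ ∈ L := by
      have : (↑g₁ : G ⧸ L) = ↑g₂ := Sum.inl.inj (e1.symm.trans f1)
      exact QuotientGroup.eq.mp this
    have hv : g₁⁻¹ * g₁' ∈ R := by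
      have : (↑g₁ : G ⧸ R) = ↑g₁' := Sum.inr.inj (e0.symm.trans (h0.trans d0))
      exact QuotientGroup.eq.mp this
    have hu' : g₁'⁻¹ * g₂' ∈ L := by
      have : (↑g₁' : G ⧸ L) = ↑g₂' := Sum.inl.inj (d1.symm.trans c1)
      exact QuotientGroup.eq.mp this
    have hunl : g₁⁻¹ * g₂ ∉ R := by
      intro hmem
      refine n02 ?_
      rw [e0, f2]
      exact congrArg Sum.inr (QuotientGroup.eq.mpr hmem)
    have hu'nl : g₁'⁻¹ * g₂' ∉ R := by
      intro hmem
      refine m02 ?_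
      rw [d0, c2]
      exact congrArg Sum.inr (QuotientGroup.eq.mpr hmem)
    have hne1 : (↑(1 : ↥L) : ↥L ⧸ (L ⊓ R).subgroupOf L) ≠ ↑(⟨g₁⁻¹ * g₂, hu⟩ : ↥L) := by
      intro heq
      have := Subgroup.mem_subgroupOf.mp (QuotientGroup.eq.mp heq)
      exact hunl (by simpa using (Subgroup.mem_inf.mp (by simpa using this)).2)
    have hne2 : (↑(1 : ↥L) : ↥L ⧸ (L ⊓ R).subgroupOf L) ≠ ↑(⟨g₁'⁻¹ * g₂', hu'⟩ : ↥L) := by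
      intro heq
      have := Subgroup.mem_subgroupOf.mp (QuotientGroup.eq.mp heq)
      exact hu'nl (by simpa using (Subgroup.mem_inf.mp (by simpa using this)).2)
    obtain ⟨k, hk1, hk2⟩ := hL2 _ _ _ _ hne1 hne2
    have hkLR : (k : G) ∈ L ⊓ R := cg_mem_of_fix_one k hk1
    have hkL : (k : G) ∈ L := (Subgroup.mem_inf.mp hkLR).1
    have hkR : (k : G) ∈ R := (Subgroup.mem_inf.mp hkLR).2
    have hk2' : ((k : G) * (g₁⁻¹ * g₂))⁻¹ * (g₁'⁻¹ * g₂') ∈ R := by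
      have : ((k * ⟨g₁⁻¹ * g₂, hu⟩ : ↥L) : ↥L ⧸ (L ⊓ R).subgroupOf L)
          = ↑(⟨g₁'⁻¹ * g₂', hu'⟩ : ↥L) := hk2
      have h2 := Subgroup.mem_subgroupOf.mp (QuotientGroup.eq.mp this)
      have h3 := (Subgroup.mem_inf.mp (by simpa using h2)).2
      simpa [mul_assoc] using h3
    refine ⟨g₁' * (k : G) * g₁⁻¹, ?_⟩
    intro i
    fin_cases i
    · rw [show ((⟨0, by omega⟩ : Fin 3) : Fin 3) = (0 : Fin 3) from rfl, e0, d0, cg_smul_inr]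
      refine congrArg Sum.inr ?_
      show (↑(g₁' * (k : G) * g₁⁻¹ * g₁) : G ⧸ R) = ↑g₁'
      refine QuotientGroup.eq.mpr ?_
      have : (g₁' * (k : G) * g₁⁻¹ * g₁)⁻¹ * g₁' = (k : G)⁻¹ := by group
      rw [this]; exact inv_mem hkR
    · rw [show ((⟨1, by omega⟩ : Fin 3) : Fin 3) = (1 : Fin 3) from rfl, e1, d1, cg_smul_inl]
      refine congrArg Sum.inl ?_
      show (↑(g₁' * (k : G) * g₁⁻¹ * g₁) : G ⧸ L) = ↑g₁'
      refine QuotientGroup.eq.mpr ?_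
      have : (g₁' * (k : G) * g₁⁻¹ * g₁)⁻¹ * g₁' = (k : G)⁻¹ := by group
      rw [this]; exact inv_mem hkL
    · rw [show ((⟨2, by omega⟩ : Fin 3) : Fin 3) = (2 : Fin 3) from rfl, f2, c2, cg_smul_inr]
      refine congrArg Sum.inr ?_
      show (↑(g₁' * (k : G) * g₁⁻¹ * g₂) : G ⧸ R) = ↑g₂'
      refine QuotientGroup.eq.mpr ?_
      have : (g₁' * (k : G) * g₁⁻¹ * g₂)⁻¹ * g₂'
          = ((k : G) * (g₁⁻¹ * g₂))⁻¹ * (g₁'⁻¹ * g₂') := by group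
      rw [this]; exact hk2'

end CosetGraphProof2

/-- **Lemma (coset graphs: local 2-arc-transitivity).**
Let `G` be a group with proper subgroups `L` and `R`, and let `Γ = Cos(G, L, R)`.
Then `Γ` is locally `(G,2)`-arc-transitive if and only if `L` acts 2-transitively on
`[L : L ∩ R]` and `R` acts 2-transitively on `[R : L ∩ R]`. -/
theorem cosetGraph_locallyTwoArcTransitive_iff
    (G : Type*) [Group G] (L R : Subgroup G) (hL : L ≠ ⊤) (hR : R ≠ ⊤) :
    LocallyArcTrans (CosetGraph G L R) G 2 ↔
      (IsTwoTrans ↥L (↥L ⧸ (L ⊓ R).subgroupOf L) ∧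
        IsTwoTrans ↥R (↥R ⧸ (L ⊓ R).subgroupOf R)) := by
  exact ⟨fun h => ⟨cg_fwd_L h, cg_fwd_R h⟩, fun h => cg_bwd h.1 h.2⟩
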